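/- Let p and p̂ be two probability mass functions on a finite set 𝒮 (the joint symbol set) with p̂ strictly positive wherever p is positive, both conditional on an observation Y with joint law p(S, Y) = p_{Y|S}(Y|S)·p_S(S). Then the difference between the matched-decoding rate R = (1/T)(Σ_k B_k − E[log₂(1/p_{S|Y}(S|Y))]) and the generalized mutual information evaluated at s = 1, GMI(1) = (1/T)(Σ_k B_k − E[log₂(Σ_{s'} p̂_{S|Y}(s'|Y)/p̂_{S|Y}(S|Y))]) under uniform priors, equals (1/T)·E_Y[D(p_{S|Y}(·|Y) ‖ p̂_{S|Y}(·|Y))], the average Kullback–Leibler divergence between the true posterior and the approximate posterior. In particular GMI(1) ≤ R, with equality iff the posteriors agree almost surely. -/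

import Mathlib

/-!
Since `∑ s', q y s' = 1`, the gap `T (R - GMI(1))` is the expected log-ratio
`E[log₂ (p_{S|Y}(S|Y) / q(S|Y))]`; disintegrating the joint law as `p_Y · p_{S|Y}` turns it
into the `p_Y`-average of the divergences `D(p_{S|Y}(·|y) ‖ q(·|y))`. Gibbs' inequality, in the
form `p log (p/q) = q klFun (p/q) + p - q` with `klFun ≥ 0` vanishing only at `1`, makes each
divergence nonnegative and zero exactly when the two posteriors agree.
-/

open Finset Real InformationTheory

section Gibbs

variable {ι : Type*} [Fintype ι] {p q : ι → ℝ} {b : ℝ}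

lemma mul_log_div_eq_mul_klFun_add {x y : ℝ} (hy : 0 < y) :
    x * log (x / y) = y * klFun (x / y) + (x - y) := by
  rw [klFun_apply]
  field_simp
  ring

lemma sum_mul_logb_div_eq_sum_mul_klFun_div (hq : ∀ i, 0 < q i) (hpq : ∑ i, p i = ∑ i, q i) :
    ∑ i, p i * logb b (p i / q i) = (∑ i, q i * klFun (p i / q i)) / log b := by
  have hcancel : ∑ i, (p i - q i) = 0 := by rw [sum_sub_distrib, hpq, sub_self]
  simp only [logb, ← mul_div_assoc, ← sum_div, mul_log_div_eq_mul_klFun_add (hq _),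
    sum_add_distrib, hcancel, add_zero]

lemma sum_mul_logb_div_nonneg (hb : 1 < b) (hp : ∀ i, 0 ≤ p i) (hq : ∀ i, 0 < q i)
    (hpq : ∑ i, p i = ∑ i, q i) : 0 ≤ ∑ i, p i * logb b (p i / q i) := by
  rw [sum_mul_logb_div_eq_sum_mul_klFun_div hq hpq]
  exact div_nonneg (sum_nonneg fun i _ ↦
    mul_nonneg (hq i).le (klFun_nonneg (div_nonneg (hp i) (hq i).le))) (log_pos hb).le

lemma sum_mul_logb_div_eq_zero_iff (hb : 1 < b) (hp : ∀ i, 0 ≤ p i) (hq : ∀ i, 0 < q i)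
    (hpq : ∑ i, p i = ∑ i, q i) : ∑ i, p i * logb b (p i / q i) = 0 ↔ ∀ i, p i = q i := by
  have hklFun_nonneg i : 0 ≤ klFun (p i / q i) := klFun_nonneg (div_nonneg (hp i) (hq i).le)
  rw [sum_mul_logb_div_eq_sum_mul_klFun_div hq hpq, div_eq_zero_iff,
    or_iff_left (log_pos hb).ne',
    sum_eq_zero_iff_of_nonneg fun i _ ↦ mul_nonneg (hq i).le (hklFun_nonneg i)]
  refine forall_congr' fun i ↦ ?_
  simp only [mem_univ, true_imp_iff]
  rw [mul_eq_zero, or_iff_right (hq i).ne',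
    klFun_eq_zero_iff (div_nonneg (hp i) (hq i).le), div_eq_one_iff_eq (hq i).ne']

end Gibbs

lemma mul_logb_div_eq_sub {x y : ℝ} (b : ℝ) (hy : y ≠ 0) :
    x * logb b (x / y) = x * logb b (1 / y) - x * logb b (1 / x) := by
  rcases eq_or_ne x 0 with rfl | hx
  · simp
  · rw [logb_div hx hy, one_div, logb_inv, one_div, logb_inv]
    ring

/-- Cross entropy minus conditional entropy is the average conditional divergence. -/
lemma sum_sum_mul_logb_inv_sub_eq_sum_mul_sum_mul_logb_div {α β : Type*} [Fintype α]
    [Fintype β] (b : ℝ) (w : α → β → ℝ) (hw : ∀ y, ∑ s, w s y ≠ 0) (q : β → α → ℝ)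
    (hq : ∀ y s, q y s ≠ 0) :
    ∑ s, ∑ y, w s y * logb b (1 / q y s)
        - ∑ s, ∑ y, w s y * logb b (1 / (w s y / ∑ s', w s' y))
      = ∑ y, (∑ s, w s y) * ∑ s, (w s y / ∑ s', w s' y)
          * logb b ((w s y / ∑ s', w s' y) / q y s) := by
  simp_rw [← sum_sub_distrib]
  rw [sum_comm]
  refine sum_congr rfl fun y _ ↦ ?_
  rw [mul_sum]
  refine sum_congr rfl fun s _ ↦ ?_
  rw [mul_logb_div_eq_sub b (hq y s), mul_sub, ← mul_assoc, ← mul_assoc,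
    mul_div_cancel₀ _ (hw y)]

lemma sum_mul_eq_zero_iff_of_pos_of_nonneg {ι : Type*} [Fintype ι] {m d : ι → ℝ}
    (hm : ∀ i, 0 < m i) (hd : ∀ i, 0 ≤ d i) : ∑ i, m i * d i = 0 ↔ ∀ i, d i = 0 := by
  rw [sum_eq_zero_iff_of_nonneg fun i _ ↦ mul_nonneg (hm i).le (hd i)]
  exact forall_congr' fun i ↦ by simp [(hm i).ne']

theorem gmi_gap_eq_avg_kl_general {α β : Type*} [Fintype α] [Fintype β]
    (T : ℝ) (hT : 0 < T)
    (w : α → β → ℝ) (hw : ∀ s y, 0 ≤ w s y)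
    (hpos : ∀ y, 0 < ∑ s, w s y)
    (q : β → α → ℝ) (hq : ∀ y s, 0 < q y s) (hq1 : ∀ y, ∑ s, q y s = 1) :
    let post : β → α → ℝ := fun y s => w s y / ∑ s', w s' y
    let R : ℝ := (1 / T) * (Real.logb 2 (Fintype.card α)
      - ∑ s, ∑ y, w s y * Real.logb 2 (1 / post y s))
    let GMI1 : ℝ := (1 / T) * (Real.logb 2 (Fintype.card α)
      - ∑ s, ∑ y, w s y * Real.logb 2 ((∑ s', q y s') / q y s))
    let D : β → ℝ := fun y => ∑ s, post y s * Real.logb 2 (post y s / q y s)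
    (R - GMI1 = (1 / T) * ∑ y, (∑ s, w s y) * D y) ∧
    GMI1 ≤ R ∧
    (GMI1 = R ↔ ∀ y s, post y s = q y s) := by
  intro post R GMI1 D
  have hpost_sum y : ∑ s, post y s = ∑ s, q y s := by
    rw [hq1, ← sum_div, div_self (hpos y).ne']
  have hpost_nonneg y s : 0 ≤ post y s := div_nonneg (hw s y) (hpos y).le
  have hD_nonneg y : 0 ≤ D y :=
    sum_mul_logb_div_nonneg one_lt_two (hpost_nonneg y) (hq y) (hpost_sum y)
  have hgap : R - GMI1 = (1 / T) * ∑ y, (∑ s, w s y) * D y := by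
    rw [← sum_sum_mul_logb_inv_sub_eq_sum_mul_sum_mul_logb_div 2 w (fun y ↦ (hpos y).ne') q
      (fun y s ↦ (hq y s).ne')]
    simp only [R, GMI1, hq1]
    ring
  have hgap_nonneg : 0 ≤ R - GMI1 := by
    rw [hgap]
    exact mul_nonneg (by positivity) (sum_nonneg fun y _ ↦ mul_nonneg (hpos y).le (hD_nonneg y))
  refine ⟨hgap, sub_nonneg.mp hgap_nonneg, ?_⟩
  rw [eq_comm, ← sub_eq_zero, hgap, mul_eq_zero, or_iff_right (by positivity),
    sum_mul_eq_zero_iff_of_pos_of_nonneg hpos hD_nonneg]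
  exact forall_congr' fun y ↦
    sum_mul_logb_div_eq_zero_iff one_lt_two (hpost_nonneg y) (hq y) (hpost_sum y)

/-- The gap between the matched-decoding rate `R` and the generalized mutual information
at `s = 1` equals the average (over the observation `Y`) Kullback–Leibler divergence between
the true posterior and the approximate posterior; in particular `GMI(1) ≤ R`, with equality
iff the posteriors agree for every observation of positive probability. Here `α` is the
finite joint-symbol set (with uniform prior), `β` the finite observation alphabet, `w` the
joint PMF of `(S, Y)`, `q` the (strictly positive) approximate posterior, and `post` the
true posterior. -/
theorem gmi_gap_eq_avg_kl {α β : Type*} [Fintype α] [Fintype β] [Nonempty α] [Nonempty β]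
    (T : ℝ) (hT : 0 < T)
    (w : α → β → ℝ) (hw : ∀ s y, 0 ≤ w s y)
    (hsum : ∑ s, ∑ y, w s y = 1)
    (hunif : ∀ s, ∑ y, w s y = 1 / (Fintype.card α : ℝ))
    (hpos : ∀ y, 0 < ∑ s, w s y)
    (q : β → α → ℝ) (hq : ∀ y s, 0 < q y s) (hq1 : ∀ y, ∑ s, q y s = 1) :
    let post : β → α → ℝ := fun y s => w s y / ∑ s', w s' y
    let R : ℝ := (1 / T) * (Real.logb 2 (Fintype.card α)
      - ∑ s, ∑ y, w s y * Real.logb 2 (1 / post y s))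
    let GMI1 : ℝ := (1 / T) * (Real.logb 2 (Fintype.card α)
      - ∑ s, ∑ y, w s y * Real.logb 2 ((∑ s', q y s') / q y s))
    let D : β → ℝ := fun y => ∑ s, post y s * Real.logb 2 (post y s / q y s)
    (R - GMI1 = (1 / T) * ∑ y, (∑ s, w s y) * D y) ∧
    GMI1 ≤ R ∧
    (GMI1 = R ↔ ∀ y s, post y s = q y s) :=
  gmi_gap_eq_avg_kl_general T hT w hw hpos q hq hq1
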